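/- Correctness of the 3D DRT (planes) recursion: let N = 2^n and f : {0,...,N-1}³ → ℤ extended by zero. Define f^m(σ₁, v₁, σ₂, v₂, d) = Σ_{u₁ ∈ {0,1}^m} Σ_{u₂ ∈ {0,1}^m} f(λ(u₁,v₁), λ(u₂,v₂), l^m_{λ(σ₁)}(u₁) + l^m_{λ(σ₂)}(u₂) + d). Then f^{m+1}((s₁,σ₁), v₁, (s₂,σ₂), v₂, d) = Σ_{a,b ∈ {0,1}} f^m(σ₁, (a,v₁), σ₂, (b,v₂), d + a·(s₁+λ(σ₁)) + b·(s₂+λ(σ₂))) for all bits s₁, s₂ and all valid σ₁, σ₂, v₁, v₂, d. -/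

import Mathlib

open Finset

/-- Closed-form discrete line `l^n_s(u_0,...,u_{n-1})`. -/
def dline (n s : ℕ) (u : ℕ → ℕ) : ℕ :=
  ∑ i ∈ Finset.range n, u (n - 1 - i) * ((s / 2 ^ i + 1) / 2)

/-- `i`-th binary digit of `k` (least significant first). -/
def bit (k i : ℕ) : ℕ := k / 2 ^ i % 2

/-- Discrete line applied to the binary digits of `k`. -/
def Lline (n s k : ℕ) : ℕ := dline n s (bit k)

/-- Partial 3D DRT of planes:
`f^m(σ₁|v₁|σ₂|v₂|d) = Σ_{u₁,u₂∈{0,1}^m} f(λ(u₁,v₁), λ(u₂,v₂), l^m_{λ(σ₁)}(u₁)+l^m_{λ(σ₂)}(u₂)+d)`,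
with slopes and block indices in decimal. -/
def pdrt3 (m : ℕ) (f : ℤ → ℤ → ℤ → ℤ) (s₁ v₁ s₂ v₂ : ℕ) (d : ℤ) : ℤ :=
  ∑ u₁ ∈ Finset.range (2 ^ m), ∑ u₂ ∈ Finset.range (2 ^ m),
    f ((u₁ : ℤ) + 2 ^ m * (v₁ : ℤ)) ((u₂ : ℤ) + 2 ^ m * (v₂ : ℤ))
      ((Lline m s₁ u₁ : ℤ) + (Lline m s₂ u₂ : ℤ) + d)

/-!
Split each summation index `u ∈ [0, 2^(m+1))` as `u + 2^m a` with `u < 2^m` and `a` its top bit.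
The top bit of `u + 2^m a` is `a` and the lower bits are those of `u`; peeling the last term off
the closed form of `l^{m+1}_s` leaves `l^m_{⌊s/2⌋}` on the lower bits plus `a · ⌊(s+1)/2⌋`, and for
the slope `s + 2σ` with `s ≤ 1` these are `l^m_σ` and `a (s + σ)`. The extra term moves into the
offset `d`, and `2^(m+1) v + 2^m a = 2^m (a + 2v)` moves `a` into the block index.
-/

theorem sum_range_mul_eq_sum_sum {M : Type*} [AddCommMonoid M] (n k : ℕ) (F : ℕ → M) :
    ∑ u ∈ range (n * k), F u = ∑ a ∈ range k, ∑ u ∈ range n, F (u + n * a) := by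
  induction k with
  | zero => simp
  | succ k ih =>
    rw [Nat.mul_succ, sum_range_add, ih, sum_range_succ]
    simp_rw [add_comm _ (n * k)]

theorem dline_succ (m s : ℕ) (u : ℕ → ℕ) :
    dline (m + 1) s u = dline m (s / 2) u + u m * ((s + 1) / 2) := by
  unfold dline
  rw [sum_range_succ']
  congr 1
  · refine sum_congr rfl fun i _ => ?_
    rw [pow_succ', ← Nat.div_div_eq_div_mul, show m + 1 - 1 - (i + 1) = m - 1 - i by omega]
  · simp

theorem dline_congr {m : ℕ} (s : ℕ) {u u' : ℕ → ℕ} (h : ∀ j < m, u j = u' j) :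
    dline m s u = dline m s u' :=
  sum_congr rfl fun i hi => by rw [h _ (by simp at hi; omega)]

theorem bit_add_two_pow_mul_of_lt (u a : ℕ) {m j : ℕ} (hj : j < m) :
    bit (u + 2 ^ m * a) j = bit u j := by
  unfold bit
  obtain ⟨c, rfl⟩ := Nat.exists_eq_add_of_lt hj
  rw [show 2 ^ (j + c + 1) * a = 2 ^ j * (2 * (2 ^ c * a)) by ring,
    Nat.add_mul_div_left _ _ (by positivity), Nat.add_mul_mod_self_left]

theorem bit_add_two_pow_mul_self {u m : ℕ} (a : ℕ) (hu : u < 2 ^ m) :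
    bit (u + 2 ^ m * a) m = a % 2 := by
  rw [bit, Nat.add_mul_div_left _ _ (by positivity), Nat.div_eq_of_lt hu, zero_add]

theorem Lline_succ_add_two_pow_mul {m u : ℕ} (s a : ℕ) (hu : u < 2 ^ m) :
    Lline (m + 1) s (u + 2 ^ m * a) = Lline m (s / 2) u + a % 2 * ((s + 1) / 2) := by
  rw [Lline, dline_succ, bit_add_two_pow_mul_self a hu,
    dline_congr _ fun j hj => bit_add_two_pow_mul_of_lt u a hj, Lline]

theorem Lline_succ_add_two_mul {m u a s : ℕ} (σ : ℕ) (hs : s ≤ 1) (hu : u < 2 ^ m) (ha : a < 2) :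
    Lline (m + 1) (s + 2 * σ) (u + 2 ^ m * a) = Lline m σ u + a * (s + σ) := by
  rw [Lline_succ_add_two_pow_mul _ _ hu, Nat.mod_eq_of_lt ha]
  congr 2 <;> omega

theorem drt3_recursion_general (m : ℕ) (f : ℤ → ℤ → ℤ → ℤ)
    (s₁ : ℕ) (hs₁ : s₁ ≤ 1) (s₂ : ℕ) (hs₂ : s₂ ≤ 1)
    (σ₁ : ℕ) (σ₂ : ℕ)
    (v₁ : ℕ) (v₂ : ℕ) (d : ℤ) :
    pdrt3 (m + 1) f (s₁ + 2 * σ₁) v₁ (s₂ + 2 * σ₂) v₂ d =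
      ∑ a ∈ Finset.range 2, ∑ b ∈ Finset.range 2,
        pdrt3 m f σ₁ (a + 2 * v₁) σ₂ (b + 2 * v₂)
          (d + (a : ℤ) * ((s₁ : ℤ) + (σ₁ : ℤ)) + (b : ℤ) * ((s₂ : ℤ) + (σ₂ : ℤ))) := by
  have split_top_bit (F : ℕ → ℤ) : ∑ u ∈ range (2 ^ (m + 1)), F u =
      ∑ a ∈ range 2, ∑ u ∈ range (2 ^ m), F (u + 2 ^ m * a) := by
    rw [pow_succ, sum_range_mul_eq_sum_sum]
  unfold pdrt3
  rw [split_top_bit]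
  refine sum_congr rfl fun a ha => ?_
  rw [sum_congr rfl fun u₁ _ => split_top_bit _, sum_comm]
  refine sum_congr rfl fun b hb => sum_congr rfl fun u₁ hu₁ => sum_congr rfl fun u₂ hu₂ => ?_
  rw [mem_range] at ha hb hu₁ hu₂
  rw [Lline_succ_add_two_mul σ₁ hs₁ hu₁ ha, Lline_succ_add_two_mul σ₂ hs₂ hu₂ hb]
  push_cast
  congr 1 <;> ring

theorem drt3_recursion (n m : ℕ) (hm : m < n) (f : ℤ → ℤ → ℤ → ℤ)
    (hf : ∀ x y z : ℤ,
      x < 0 ∨ (2 : ℤ) ^ n ≤ x ∨ y < 0 ∨ (2 : ℤ) ^ n ≤ y ∨ z < 0 ∨ (2 : ℤ) ^ n ≤ z →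
      f x y z = 0)
    (s₁ : ℕ) (hs₁ : s₁ ≤ 1) (s₂ : ℕ) (hs₂ : s₂ ≤ 1)
    (σ₁ : ℕ) (hσ₁ : σ₁ < 2 ^ m) (σ₂ : ℕ) (hσ₂ : σ₂ < 2 ^ m)
    (v₁ : ℕ) (hv₁ : v₁ < 2 ^ (n - m - 1)) (v₂ : ℕ) (hv₂ : v₂ < 2 ^ (n - m - 1)) (d : ℤ) :
    pdrt3 (m + 1) f (s₁ + 2 * σ₁) v₁ (s₂ + 2 * σ₂) v₂ d =
      ∑ a ∈ Finset.range 2, ∑ b ∈ Finset.range 2,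
        pdrt3 m f σ₁ (a + 2 * v₁) σ₂ (b + 2 * v₂)
          (d + (a : ℤ) * ((s₁ : ℤ) + (σ₁ : ℤ)) + (b : ℤ) * ((s₂ : ℤ) + (σ₂ : ℤ))) :=
  drt3_recursion_general m f s₁ hs₁ s₂ hs₂ σ₁ σ₂ v₁ v₂ d
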